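/- Let f ∈ Γ_n, Q ∈ ℝ^{m×n}, and c > 0. The problem minimize over y ∈ ℝ^m of f*(−Qᵀy) + (c/2)‖y − r/c‖² admits the solution y* = (1/c)(Qx* + r), where x* is any minimizer of x ↦ f(x) + (1/(2c))‖Qx + r‖² (assuming f*∘(−Qᵀ) is proper so the minimizer exists and is unique). -/

import Mathlib

open scoped BigOperators
noncomputable section

abbrev Evec (n : ℕ) := EuclideanSpace ℝ (Fin n)

/-- Convexity for extended-real-valued functions. -/
def IsConvexFn {n : ℕ} (f : Evec n → EReal) : Prop :=
  ∀ x y : Evec n, ∀ a b : ℝ, 0 ≤ a → 0 ≤ b → a + b = 1 →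
    f (a • x + b • y) ≤ (a : EReal) * f x + (b : EReal) * f y

/-- Properness: never `⊥` and finite somewhere. -/
def IsProperFn {n : ℕ} (f : Evec n → EReal) : Prop :=
  (∀ x, f x ≠ ⊥) ∧ ∃ x, f x ≠ ⊤

/-- `f ∈ Γ_n`: proper, closed (lsc) and convex. -/
def InGamma {n : ℕ} (f : Evec n → EReal) : Prop :=
  IsProperFn f ∧ LowerSemicontinuous f ∧ IsConvexFn f

/-- Convex subdifferential. -/
def subdiff {n : ℕ} (f : Evec n → EReal) (x : Evec n) : Set (Evec n) :=
  {u | ∀ y, f x + ((inner ℝ u (y - x) : ℝ) : EReal) ≤ f y}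

/-- Convex (Fenchel) conjugate. -/
def conjFn {n : ℕ} (f : Evec n → EReal) (z : Evec n) : EReal :=
  ⨆ x : Evec n, ((inner ℝ z x : ℝ) : EReal) - f x

open Classical in
def indFn {n : ℕ} (S : Set (Evec n)) (x : Evec n) : EReal :=
  if x ∈ S then 0 else ⊤

/- Minimality of `x*` for `f + (1/(2c))‖Q · + r‖²` gives the optimality condition
`-Qᵀy* ∈ ∂f(x*)`, because the gradient of the quadratic at `x*` is `Qᵀy*`. Hence Fenchel–Young
holds with equality at `(x*, -Qᵀy*)`, while for every `y` it bounds `f*(-Qᵀy)` below by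
`⟪-Qᵀy, x*⟫ - f(x*)`. The resulting lower bound of the dual objective is a quadratic in `y` with
Hessian `c` and critical point `y*`, touching the objective at `y*`; so the objective exceeds its
value at `y*` by at least `(c/2)‖y - y*‖²`, which gives both optimality and uniqueness. -/

open Filter InnerProductSpace

theorem unique_minimizer_of_quadratic_growth {E : Type*} [NormedAddCommGroup E] {φ : E → EReal}
    {y₀ : E} {v c : ℝ} (hc : 0 < c) (hv : φ y₀ = v)
    (hgrowth : ∀ y, φ y₀ + ((c * ‖y - y₀‖ ^ 2 : ℝ) : EReal) ≤ φ y) :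
    (∀ y, φ y₀ ≤ φ y) ∧ ∀ y, (∀ y', φ y ≤ φ y') → y = y₀ := by
  refine ⟨fun y => le_trans ?_ (hgrowth y), fun y hy => ?_⟩
  · exact le_add_of_nonneg_right (EReal.coe_nonneg.mpr (by positivity))
  · have hle := (hgrowth y).trans (hy y₀)
    rw [hv] at hle
    norm_cast at hle
    have hq : c * ‖y - y₀‖ ^ 2 = 0 := le_antisymm (by linarith) (by positivity)
    simpa [hc.ne', sub_eq_zero] using hq

theorem hasGradientAt_mul_norm_sq_add {E F : Type*} [NormedAddCommGroup E]
    [InnerProductSpace ℝ E] [CompleteSpace E] [NormedAddCommGroup F] [InnerProductSpace ℝ F]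
    [CompleteSpace F] (Q : E →L[ℝ] F) (r : F) (c : ℝ) (x₀ : E) :
    HasGradientAt (fun x => 1 / (2 * c) * ‖Q x + r‖ ^ 2)
      (ContinuousLinearMap.adjoint Q ((1 / c) • (Q x₀ + r))) x₀ := by
  refine ((Q.hasFDerivAt.add_const r).norm_sq.const_mul (1 / (2 * c))).congr_fderiv ?_
  ext v
  simp only [one_div, mul_inv_rev, map_add, ContinuousLinearMap.add_comp, smul_add, add_apply,
    smul_apply, ContinuousLinearMap.comp_apply, coe_innerSL_apply, nsmul_eq_mul, Nat.cast_ofNat, smul_eq_mul,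
    map_smul, toDual_apply_apply, ContinuousLinearMap.adjoint_inner_left]
  ring

theorem neg_mem_subdiff_of_hasGradientAt {n : ℕ} {f : Evec n → EReal} (hconv : IsConvexFn f)
    {g : Evec n → ℝ} {x₀ u : Evec n} (hmin : ∀ x, f x₀ + g x₀ ≤ f x + g x)
    (hg : HasGradientAt g u x₀) : -u ∈ subdiff f x₀ := by
  intro x
  induction hx₀ : f x₀ using EReal.rec with
  | bot => simp
  | top =>
    have hx := hmin x
    rw [hx₀, EReal.top_add_coe, top_le_iff] at hx
    rw [EReal.top_add_coe, top_le_iff]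
    by_contra hfx
    exact (EReal.add_lt_top hfx (EReal.coe_ne_top _)).ne hx
  | coe a =>
    induction hx : f x using EReal.rec with
    | bot => simpa [hx₀, hx] using hmin x
    | top => simp
    | coe b =>
      have hslope : ∀ t ∈ Set.Ioc (0 : ℝ) 1,
          a - b ≤ t⁻¹ • (g (x₀ + t • (x - x₀)) - g x₀) := by
        rintro t ⟨ht₀, ht₁⟩
        have hseg : x₀ + t • (x - x₀) = (1 - t) • x₀ + t • x := by module
        have hconvt := hconv x₀ x (1 - t) t (by linarith) ht₀.le (by ring)
        rw [hx₀, hx, ← hseg] at hconvt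
        have hle := (hmin _).trans (add_le_add_left hconvt _)
        rw [hx₀] at hle
        norm_cast at hle
        rw [smul_eq_mul, le_inv_mul_iff₀ ht₀]
        linarith
      have hlim := ((hasGradientAt_iff_hasFDerivAt.mp hg).hasLineDerivAt
        (x - x₀)).tendsto_slope_zero_right
      have hdiff := ge_of_tendsto hlim (eventually_of_mem (Ioc_mem_nhdsGT one_pos) hslope)
      rw [toDual_apply_apply] at hdiff
      norm_cast
      rw [inner_neg_left]
      linarith

theorem inner_sub_le_conjFn {n : ℕ} (f : Evec n → EReal) (z x : Evec n) :
    ((inner ℝ z x : ℝ) : EReal) - f x ≤ conjFn f z :=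
  le_iSup (fun x => ((inner ℝ z x : ℝ) : EReal) - f x) x

theorem conjFn_eq_of_mem_subdiff {n : ℕ} {f : Evec n → EReal} {x u : Evec n}
    (hu : u ∈ subdiff f x) : conjFn f u = ((inner ℝ u x : ℝ) : EReal) - f x := by
  refine le_antisymm (iSup_le fun y => ?_) (inner_sub_le_conjFn f u x)
  have huy := hu y
  induction hx : f x using EReal.rec with
  | bot => simp
  | top =>
    rw [hx, EReal.top_add_coe, top_le_iff] at huy
    simp [huy]
  | coe a =>
    induction hy : f y using EReal.rec with
    | bot => simp [hx, hy] at huy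
    | top => simp
    | coe b =>
      rw [hx, hy] at huy
      norm_cast at huy ⊢
      rw [inner_sub_right] at huy
      linarith

def dualProxObjective {n m : ℕ} (f : Evec n → EReal) (Q : Evec n →L[ℝ] Evec m) (c : ℝ)
    (r y : Evec m) : EReal :=
  conjFn f (-(ContinuousLinearMap.adjoint Q y)) + ((c / 2 * ‖y - (1 / c) • r‖ ^ 2 : ℝ) : EReal)

theorem dualProxObjective_add_le {n m : ℕ} {f : Evec n → EReal} {Q : Evec n →L[ℝ] Evec m}
    {c : ℝ} (hc : c ≠ 0) {r : Evec m} {x₀ : Evec n} {y₀ : Evec m}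
    (hsub : -(ContinuousLinearMap.adjoint Q y₀) ∈ subdiff f x₀)
    (hy₀ : y₀ = (1 / c) • (Q x₀ + r)) (y : Evec m) :
    dualProxObjective f Q c r y₀ + ((c / 2 * ‖y - y₀‖ ^ 2 : ℝ) : EReal)
      ≤ dualProxObjective f Q c r y := by
  set A : Evec m → ℝ := fun y => inner ℝ (-(ContinuousLinearMap.adjoint Q y)) x₀
  have hs₀ : y₀ - (1 / c) • r = (1 / c) • Q x₀ := by
    rw [hy₀, smul_add, add_sub_cancel_right]
  have hs : y - (1 / c) • r = (y - y₀) + (1 / c) • Q x₀ := by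
    rw [← hs₀]; abel
  have hsquare : A y₀ + c / 2 * ‖y₀ - (1 / c) • r‖ ^ 2 + c / 2 * ‖y - y₀‖ ^ 2
      = A y + c / 2 * ‖y - (1 / c) • r‖ ^ 2 := by
    simp only [A]
    rw [hs₀, hs, norm_add_sq_real, norm_smul, inner_neg_left, inner_neg_left,
      ContinuousLinearMap.adjoint_inner_left, ContinuousLinearMap.adjoint_inner_left,
      real_inner_smul_right, inner_sub_left]
    field_simp
    ring
  calc dualProxObjective f Q c r y₀ + ((c / 2 * ‖y - y₀‖ ^ 2 : ℝ) : EReal)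
      = ((A y₀ + c / 2 * ‖y₀ - (1 / c) • r‖ ^ 2 + c / 2 * ‖y - y₀‖ ^ 2 : ℝ) : EReal)
          + -f x₀ := by
        rw [dualProxObjective, conjFn_eq_of_mem_subdiff hsub, sub_eq_add_neg]
        push_cast
        ac_rfl
    _ = ((A y : ℝ) : EReal) - f x₀ + ((c / 2 * ‖y - (1 / c) • r‖ ^ 2 : ℝ) : EReal) := by
        rw [hsquare, EReal.coe_add, add_right_comm, ← sub_eq_add_neg]
    _ ≤ dualProxObjective f Q c r y := by
        rw [dualProxObjective]
        gcongr
        exact inner_sub_le_conjFn _ _ _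

theorem dual_prox_step_solution_general {n m : ℕ} (f : Evec n → EReal) (hf : InGamma f)
    (Q : Evec n →L[ℝ] Evec m) (c : ℝ) (hc : 0 < c) (r : Evec m)
    (xstar : Evec n)
    (hx : ∀ x : Evec n,
      f xstar + ((1 / (2 * c) * ‖Q xstar + r‖ ^ 2 : ℝ) : EReal)
        ≤ f x + ((1 / (2 * c) * ‖Q x + r‖ ^ 2 : ℝ) : EReal))
    (ystar : Evec m) (hy : ystar = (1 / c) • (Q xstar + r)) :
    (∀ y : Evec m,
      conjFn f (-(ContinuousLinearMap.adjoint Q ystar))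
          + ((c / 2 * ‖ystar - (1 / c) • r‖ ^ 2 : ℝ) : EReal)
        ≤ conjFn f (-(ContinuousLinearMap.adjoint Q y))
          + ((c / 2 * ‖y - (1 / c) • r‖ ^ 2 : ℝ) : EReal))
    ∧ ∀ y : Evec m,
        (∀ y' : Evec m,
          conjFn f (-(ContinuousLinearMap.adjoint Q y))
              + ((c / 2 * ‖y - (1 / c) • r‖ ^ 2 : ℝ) : EReal)
            ≤ conjFn f (-(ContinuousLinearMap.adjoint Q y'))
              + ((c / 2 * ‖y' - (1 / c) • r‖ ^ 2 : ℝ) : EReal))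
        → y = ystar := by
  obtain ⟨⟨hbot, x₁, hx₁⟩, -, hconv⟩ := hf
  have hsub : -(ContinuousLinearMap.adjoint Q ystar) ∈ subdiff f xstar :=
    hy ▸ neg_mem_subdiff_of_hasGradientAt hconv hx (hasGradientAt_mul_norm_sq_add Q r c xstar)
  have hfin : f xstar ≠ ⊤ := fun htop => by
    have h := hx x₁
    rw [htop, EReal.top_add_coe, top_le_iff] at h
    exact (EReal.add_lt_top hx₁ (EReal.coe_ne_top _)).ne h
  obtain ⟨a, ha⟩ : ∃ a : ℝ, f xstar = a := ⟨_, (EReal.coe_toReal hfin (hbot _)).symm⟩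
  have hval : dualProxObjective f Q c r ystar
      = ((inner ℝ (-(ContinuousLinearMap.adjoint Q ystar)) xstar - a
          + c / 2 * ‖ystar - (1 / c) • r‖ ^ 2 : ℝ) : EReal) := by
    rw [dualProxObjective, conjFn_eq_of_mem_subdiff hsub, ha]
    norm_cast
  exact unique_minimizer_of_quadratic_growth (half_pos hc) hval
    (dualProxObjective_add_le hc.ne' hsub hy)

/-- the strongly convex dual subproblem
`min_y f*(-Qᵀy) + (c/2)‖y - r/c‖²` is solved by `y* = (1/c)(Qx* + r)` where
`x*` minimizes `x ↦ f(x) + (1/(2c))‖Qx + r‖²`; the minimizer is unique. -/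
theorem dual_prox_step_solution {n m : ℕ} (f : Evec n → EReal) (hf : InGamma f)
    (Q : Evec n →L[ℝ] Evec m) (c : ℝ) (hc : 0 < c) (r : Evec m)
    (hproper : ∃ y : Evec m, conjFn f (-(ContinuousLinearMap.adjoint Q y)) ≠ ⊤)
    (xstar : Evec n)
    (hx : ∀ x : Evec n,
      f xstar + ((1 / (2 * c) * ‖Q xstar + r‖ ^ 2 : ℝ) : EReal)
        ≤ f x + ((1 / (2 * c) * ‖Q x + r‖ ^ 2 : ℝ) : EReal))
    (ystar : Evec m) (hy : ystar = (1 / c) • (Q xstar + r)) :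
    (∀ y : Evec m,
      conjFn f (-(ContinuousLinearMap.adjoint Q ystar))
          + ((c / 2 * ‖ystar - (1 / c) • r‖ ^ 2 : ℝ) : EReal)
        ≤ conjFn f (-(ContinuousLinearMap.adjoint Q y))
          + ((c / 2 * ‖y - (1 / c) • r‖ ^ 2 : ℝ) : EReal))
    ∧ ∀ y : Evec m,
        (∀ y' : Evec m,
          conjFn f (-(ContinuousLinearMap.adjoint Q y))
              + ((c / 2 * ‖y - (1 / c) • r‖ ^ 2 : ℝ) : EReal)
            ≤ conjFn f (-(ContinuousLinearMap.adjoint Q y'))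
              + ((c / 2 * ‖y' - (1 / c) • r‖ ^ 2 : ℝ) : EReal))
        → y = ystar :=
  dual_prox_step_solution_general f hf Q c hc r xstar hx ystar hy
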